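/- arXiv:2605.20175 — 2 statements merged into one kernel-verified Lean document; each statement's English description precedes it below -/
import Mathlib

section
/- Suppose (c_n)_{n ∈ ℤ} is a family of real numbers with c_{-n} = -c_n and c_0 = 0 satisfying (n-m) c_{n+m} + (m-k) c_{m+k} + (k-n) c_{k+n} = 0 for all n, m, k ∈ ℤ with n + m + k = 0. Then there exist real numbers a, b such that c_n = a·n + b·n³ for all n ∈ ℤ. -/
/-- If `(c_n)` is an antisymmetric real sequence with `c_0 = 0` satisfying
`(n-m)c_{n+m} + (m-k)c_{m+k} + (k-n)c_{k+n} = 0` whenever `n + m + k = 0`, then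
`c_n = a n + b n³` for some real numbers `a, b`. -/
theorem antidiagonal_cocycle_cubic (c : ℤ → ℝ) (h0 : c 0 = 0)
    (hodd : ∀ n : ℤ, c (-n) = -c n)
    (hrel : ∀ n m k : ℤ, n + m + k = 0 →
      ((n : ℝ) - (m : ℝ)) * c (n + m) + ((m : ℝ) - (k : ℝ)) * c (m + k)
        + ((k : ℝ) - (n : ℝ)) * c (k + n) = 0) :
    ∃ a b : ℝ, ∀ n : ℤ, c n = a * (n : ℝ) + b * (n : ℝ) ^ 3 := by
  set b : ℝ := (c 2 - 2 * c 1) / 6 with hb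
  set a : ℝ := c 1 - b with ha
  refine ⟨a, b, ?_⟩
  have step : ∀ n : ℤ, c (n + 1) * ((n : ℝ) - 1)
      = ((n : ℝ) + 2) * c n - (2 * (n : ℝ) + 1) * c 1 := by
    intro n
    have h := hrel n 1 (-(n + 1)) (by ring)
    have e1 : (1 : ℤ) + -(n + 1) = -n := by ring
    have e2 : -(n + 1) + n = -1 := by ring
    rw [e1, e2, hodd n, hodd 1] at h
    push_cast at h
    linarith [h]
  have key2 : ∀ n : ℕ, 2 ≤ n → c n = a * n + b * (n : ℝ) ^ 3 := by
    intro n hn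
    induction n, hn using Nat.le_induction with
    | base =>
      push_cast
      rw [ha, hb]; ring
    | succ n hn ih =>
      have hs := step (n : ℤ)
      have hcast : ((n : ℤ) + 1 : ℤ) = ((n + 1 : ℕ) : ℤ) := by push_cast; ring
      rw [hcast] at hs
      have hne : ((n : ℝ)) - 1 ≠ 0 := by
        have : (2 : ℝ) ≤ (n : ℝ) := by exact_mod_cast hn
        linarith
      have hc1 : c 1 = a + b := by rw [ha]; ring
      rw [ih, hc1] at hs
      push_cast at hs ⊢
      exact mul_right_cancel₀ hne (hs.trans (by ring))
  have key : ∀ n : ℕ, c n = a * n + b * (n : ℝ) ^ 3 := by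
    intro n
    match n with
    | 0 => simpa using h0
    | 1 => push_cast; rw [ha]; ring
    | (n + 2) => exact key2 (n + 2) (by omega)
  intro n
  obtain ⟨m, rfl | rfl⟩ := Int.eq_nat_or_neg n
  · exact_mod_cast key m
  · rw [hodd, show ((-(m : ℤ) : ℤ) : ℝ) = -(m : ℝ) by push_cast; ring]
    rw [key m]; ring
end

section
/- Let c : ℤ → ℝ satisfy c_0 = 0, c_{-n} = -c_n, and the recursion c_{n+1} = ((n+2) c_n - (2n+1) c_1)/(n-1) for all n ≥ 2. Then c is the unique linear combination of the sequences n ↦ n and n ↦ n³ determined by the initial values c_1, c_2; explicitly, c_n = ((8c_1 - c_2)/6)·n + ((c_2 - 2c_1)/6)·n³ for all n ≥ 1. -/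
/-- Let `c : ℤ → ℝ` satisfy `c_0 = 0`, `c_{-n} = -c_n` and the recursion
`c_{n+1} = ((n+2)c_n - (2n+1)c_1)/(n-1)` for `n ≥ 2`. Then `c` is the linear combination
of `n ↦ n` and `n ↦ n³` determined by `c_1, c_2`:
`c_n = ((8c_1 - c_2)/6) n + ((c_2 - 2c_1)/6) n³` for all `n ≥ 1`. -/
theorem recursion_linear_cubic (c : ℤ → ℝ) (h0 : c 0 = 0)
    (hodd : ∀ n : ℤ, c (-n) = -c n)
    (hrec : ∀ n : ℤ, 2 ≤ n →
      c (n + 1) = (((n : ℝ) + 2) * c n - (2 * (n : ℝ) + 1) * c 1) / ((n : ℝ) - 1)) :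
    ∀ n : ℤ, 1 ≤ n →
      c n = ((8 * c 1 - c 2) / 6) * (n : ℝ) + ((c 2 - 2 * c 1) / 6) * (n : ℝ) ^ 3 := by
  have key : ∀ n : ℤ, 2 ≤ n →
      c n = ((8 * c 1 - c 2) / 6) * (n : ℝ) + ((c 2 - 2 * c 1) / 6) * (n : ℝ) ^ 3 := by
    have aux : ∀ k : ℕ, c (2 + k) = ((8 * c 1 - c 2) / 6) * ((2 + k : ℤ) : ℝ)
        + ((c 2 - 2 * c 1) / 6) * ((2 + k : ℤ) : ℝ) ^ 3 := by
      intro k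
      induction k with
      | zero => push_cast; ring
      | succ k ih =>
        have hk : (2 : ℤ) ≤ 2 + k := by omega
        have hne : ((2 + k : ℤ) : ℝ) - 1 ≠ 0 := by push_cast; nlinarith [Nat.cast_nonneg (α := ℝ) k]
        have : (2 : ℤ) + (k + 1 : ℕ) = (2 + k) + 1 := by push_cast; ring
        rw [this, hrec _ hk, ih]
        push_cast at hne ⊢
        field_simp
        ring
    intro n hn
    obtain ⟨k, rfl⟩ : ∃ k : ℕ, n = 2 + k := ⟨(n - 2).toNat, by omega⟩
    exact aux k
  intro n hn
  rcases eq_or_lt_of_le hn with h | h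
  · rw [← h]; push_cast; ring
  · exact key n h
end
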